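/- Let A⁺, A⁻ : ℝ → ℝ and u⁺, u⁻, û, c ∈ ℝ. Assume the Rankine–Hugoniot condition A⁺(u⁺) = A⁻(u⁻) and that the Kruzkov entropy inequality holds at c. Then: (v) if û ≤ u⁻ < c < u⁺, then A⁺(u⁺) ≤ A⁺(c); (vi) if û < c < u⁻ ≤ u⁺, then A⁻(c) ≤ A⁺(c). -/

import Mathlib

/-! In both cases the position of `c` relative to `û, u⁻, u⁺` fixes every sign and indicator, so each
side of the Kruzkov inequality is `A(u) - 2 A(c)` or `-A(u)`; the Rankine–Hugoniot condition then
cancels `A⁺(u⁺)` against `A⁻(u⁻)`. -/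

open MeasureTheory Filter Set

/-- The Kruzkov entropy inequality at `c` for data `(um, up, uh)`:
`A⁺(u⁺)·sign(u⁺−c) − 2·sign(u⁺−û)·A⁺(c)·𝟙_{(û,u⁺)}(c) ≤
 A⁻(u⁻)·sign(u⁻−c) − 2·sign(u⁻−û)·A⁻(c)·𝟙_{(û,u⁻)}(c)`. -/
def KruzkovIneq (Ap Am : ℝ → ℝ) (um up uh c : ℝ) : Prop :=
  Ap up * Real.sign (up - c) -
      2 * Real.sign (up - uh) * Ap c * Set.indicator (Set.uIoo uh up) (1 : ℝ → ℝ) c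
    ≤ Am um * Real.sign (um - c) -
      2 * Real.sign (um - uh) * Am c * Set.indicator (Set.uIoo uh um) (1 : ℝ → ℝ) c

noncomputable def kruzkovSide (A : ℝ → ℝ) (u uh c : ℝ) : ℝ :=
  A u * Real.sign (u - c) - 2 * Real.sign (u - uh) * A c * Set.indicator (Set.uIoo uh u) 1 c

theorem kruzkovIneq_iff (Ap Am : ℝ → ℝ) (um up uh c : ℝ) :
    KruzkovIneq Ap Am um up uh c ↔ kruzkovSide Ap up uh c ≤ kruzkovSide Am um uh c :=
  Iff.rfl

section kruzkovSide

variable (A : ℝ → ℝ) {u uh c : ℝ}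

theorem kruzkovSide_of_mem_Ioo (hc : c ∈ Ioo uh u) : kruzkovSide A u uh c = A u - 2 * A c := by
  have hmem : c ∈ uIoo uh u := by rwa [uIoo_of_lt (hc.1.trans hc.2)]
  rw [kruzkovSide, Real.sign_of_pos (sub_pos.2 hc.2), Real.sign_of_pos (by linarith [hc.1, hc.2]),
    indicator_of_mem hmem]
  simp

theorem kruzkovSide_of_lt_of_lt (huh : uh < c) (hu : u < c) : kruzkovSide A u uh c = -A u := by
  have hnmem : c ∉ uIoo uh u := fun h => (lt_max_iff.1 h.2).elim huh.not_gt hu.not_gt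
  rw [kruzkovSide, Real.sign_of_neg (sub_neg.2 hu), indicator_of_notMem hnmem]
  simp

end kruzkovSide

theorem stmt_14 (Ap Am : ℝ → ℝ) (up um uh c : ℝ)
    (hRH : Ap up = Am um)
    (hkruz : KruzkovIneq Ap Am um up uh c) :
    (uh ≤ um → um < c → c < up → Ap up ≤ Ap c) ∧
    (uh < c → c < um → um ≤ up → Am c ≤ Ap c) := by
  rw [kruzkovIneq_iff] at hkruz
  constructor
  · intro huh hum hup
    rw [kruzkovSide_of_mem_Ioo Ap ⟨huh.trans_lt hum, hup⟩,
      kruzkovSide_of_lt_of_lt Am (huh.trans_lt hum) hum] at hkruz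
    linarith
  · intro huh hum hup
    rw [kruzkovSide_of_mem_Ioo Ap ⟨huh, hum.trans_le hup⟩, kruzkovSide_of_mem_Ioo Am ⟨huh, hum⟩]
      at hkruz
    linarith
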